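/- Let (X,S) be a nondegenerate symmetric set and let Φ : G_X → M_X be the group homomorphism with Φ(x) = ι(f_x^{-1}) · κ(e_x) for each generator x ∈ X. Write Φ(g) = ι(ρ(g)) · κ(π(g)) with ρ(g) ∈ Perm(X) and π(g) ∈ ℤ^{(X)}. Then: (a) π satisfies the 1-cocycle identity π(g₁g₂) = ρ(g₂)^{-1} · π(g₁) + π(g₂) for all g₁, g₂ ∈ G_X; and (b) π : G_X → ℤ^{(X)} is a bijection. In particular, Φ is injective. -/

import Mathlib

/-- `(X,S)` is nondegenerate. -/
def Nondeg {X : Type*} (S : X × X → X × X) : Prop :=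
  (∀ y : X, Function.Bijective fun x => (S (x, y)).2) ∧
  (∀ x : X, Function.Bijective fun y => (S (x, y)).1)

/-- `S^{12} : X³ → X³`. -/
def S12 {X : Type*} (S : X × X → X × X) : X × X × X → X × X × X :=
  fun p => ((S (p.1, p.2.1)).1, (S (p.1, p.2.1)).2, p.2.2)

/-- `S^{23} : X³ → X³`. -/
def S23 {X : Type*} (S : X × X → X × X) : X × X × X → X × X × X :=
  fun p => (p.1, (S (p.2.1, p.2.2)).1, (S (p.2.1, p.2.2)).2)

/-- `(X,S)` is braided. -/
def Braided {X : Type*} (S : X × X → X × X) : Prop :=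
  S12 S ∘ S23 S ∘ S12 S = S23 S ∘ S12 S ∘ S23 S

/-- `(X,S)` is involutive. -/
def Invol {X : Type*} (S : X × X → X × X) : Prop := S ∘ S = id

/-- The defining relations of the structure group: `x·y = t·z` whenever `S(x,y) = (t,z)`. -/
def structRels {X : Type*} (S : X × X → X × X) : Set (FreeGroup X) :=
  {r | ∃ x y : X,
    r = FreeGroup.of x * FreeGroup.of y *
      (FreeGroup.of ((S (x, y)).1) * FreeGroup.of ((S (x, y)).2))⁻¹}

/-- The structure group `G_X` of `(X,S)`. -/
abbrev StructureGroup {X : Type*} (S : X × X → X × X) : Type _ :=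
  PresentedGroup (structRels S)

/-- The action of `Perm X` on the free abelian group `ℤ^{(X)}` permuting the basis,
as a homomorphism into `MulAut (Multiplicative (X →₀ ℤ))`. -/
noncomputable def permMulHom (X : Type*) :
    Equiv.Perm X →* MulAut (Multiplicative (X →₀ ℤ)) where
  toFun σ := AddEquiv.toMultiplicative (Finsupp.domCongr σ)
  map_one' := by
    ext t : 1
    show Multiplicative.ofAdd
        (Finsupp.equivMapDomain (Equiv.refl X) (Multiplicative.toAdd t)) = t
    rw [Finsupp.equivMapDomain_refl]
    rfl
  map_mul' σ τ := by
    ext t : 1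
    show Multiplicative.ofAdd
        (Finsupp.equivMapDomain (τ.trans σ) (Multiplicative.toAdd t)) =
      Multiplicative.ofAdd
        (Finsupp.equivMapDomain σ (Finsupp.equivMapDomain τ (Multiplicative.toAdd t)))
    rw [Finsupp.equivMapDomain_trans]

/-- `M_X = Perm(X) ⋉ ℤ^{(X)}`. -/
abbrev MX (X : Type*) : Type _ :=
  SemidirectProduct (Multiplicative (X →₀ ℤ)) (Equiv.Perm X) (permMulHom X)

/-- The canonical inclusion `ι : Perm(X) → M_X`. -/
noncomputable def iotaMX {X : Type*} : Equiv.Perm X →* MX X := SemidirectProduct.inr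

/-- The canonical inclusion `κ : ℤ^{(X)} → M_X`. -/
noncomputable def kappaMX {X : Type*} (t : X →₀ ℤ) : MX X :=
  SemidirectProduct.inl (Multiplicative.ofAdd t)

/-- The permutation `f_x` of `X`, for a nondegenerate `(X,S)`. -/
noncomputable def fperm {X : Type*} (S : X × X → X × X) (hnd : Nondeg S) (x : X) : Equiv.Perm X :=
  Equiv.ofBijective (fun a => (S (a, x)).2) (hnd.1 x)

theorem Equiv.Perm.apply_inv_self {X : Type*} (f : Equiv.Perm X) (x : X) : f (f⁻¹ x) = x :=
  Equiv.apply_symm_apply f x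

theorem Equiv.Perm.inv_apply_self {X : Type*} (f : Equiv.Perm X) (x : X) : f⁻¹ (f x) = x :=
  Equiv.symm_apply_apply f x

namespace CB

variable {X : Type*} {S : X × X → X × X}

noncomputable def gperm (S : X × X → X × X) (hnd : Nondeg S) (x : X) : Equiv.Perm X :=
  Equiv.ofBijective (fun y => (S (x, y)).1) (hnd.2 x)

variable (hnd : Nondeg S)

lemma fperm_apply (x a : X) : fperm S hnd x a = (S (a, x)).2 := rfl
lemma gperm_apply (x y : X) : gperm S hnd x y = (S (x, y)).1 := rfl

lemma S_eq (x y : X) : S (x, y) = (gperm S hnd x y, fperm S hnd y x) := rfl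

lemma SS (hinv : Invol S) (p : X × X) : S (S p) = p := congrFun hinv p

/-- I1 -/
lemma I1 (hinv : Invol S) (x y : X) :
    gperm S hnd (gperm S hnd x y) (fperm S hnd y x) = x :=
  congrArg Prod.fst (SS hinv (x, y))

/-- I2 -/
lemma I2 (hinv : Invol S) (x y : X) :
    fperm S hnd (fperm S hnd y x) (gperm S hnd x y) = y :=
  congrArg Prod.snd (SS hinv (x, y))

/-- Y3 from the braid relation -/
lemma Y3 (hbr : Braided S) (x y z : X) :
    fperm S hnd z (fperm S hnd y x) =
      fperm S hnd (fperm S hnd z y) (fperm S hnd (gperm S hnd y z) x) :=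
  congrArg (fun p => p.2.2) (congrFun hbr (x, y, z))

/-- C : `g_x y = f_{f_y x}⁻¹ y` -/
lemma lemC (hinv : Invol S) (x y : X) :
    gperm S hnd x y = (fperm S hnd (fperm S hnd y x))⁻¹ y := by
  rw [Equiv.Perm.inv_def, Equiv.eq_symm_apply]
  exact I2 hnd hinv x y

/-- C' : `f_y x = g_{g_x y}⁻¹ x` -/
lemma lemC' (hinv : Invol S) (x y : X) :
    fperm S hnd y x = (gperm S hnd (gperm S hnd x y))⁻¹ x := by
  rw [Equiv.Perm.inv_def, Equiv.eq_symm_apply]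
  exact I1 hnd hinv x y

/-- (pi) for a pair `S(x,x') = (y,y')` : `F x' * F x = F y' * F y`. -/
lemma pair_perm (hbr : Braided S) (x x' : X) :
    fperm S hnd x' * fperm S hnd x =
      fperm S hnd (fperm S hnd x' x) * fperm S hnd (gperm S hnd x x') := by
  ext a
  exact Y3 hnd hbr a x x'

/-- (p3) involutivity swap: `S (y, y') = (x, x')` where `(y,y') = S(x,x')`. -/
lemma pair_swap (hinv : Invol S) (x x' : X) :
    S (gperm S hnd x x', fperm S hnd x' x) = (x, x') :=
  SS hinv (x, x')

lemma pair_g (hinv : Invol S) (x x' : X) :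
    gperm S hnd (gperm S hnd x x') (fperm S hnd x' x) = x := I1 hnd hinv x x'

lemma pair_f (hinv : Invol S) (x x' : X) :
    fperm S hnd (fperm S hnd x' x) (gperm S hnd x x') = x' := I2 hnd hinv x x'

/-- The diagonal map `T`. -/
noncomputable def Tmap (S : X × X → X × X) (hnd : Nondeg S) (x : X) : X :=
  (fperm S hnd x)⁻¹ x

noncomputable def Umap (S : X × X → X × X) (hnd : Nondeg S) (y : X) : X :=
  (gperm S hnd y)⁻¹ y

/-- (p4): `T x' = F x (T y)` where `(y,y') = S(x,x')`. -/
lemma pair_T1 (hbr : Braided S) (hinv : Invol S) (x x' : X) :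
    Tmap S hnd x' = fperm S hnd x (Tmap S hnd (gperm S hnd x x')) := by
  have hpi := pair_perm hnd hbr x x'
  set y := gperm S hnd x x'
  set y' := fperm S hnd x' x
  have h1 : x' = fperm S hnd y' y := (pair_f hnd hinv x x').symm
  have h2 : (fperm S hnd x')⁻¹ * fperm S hnd y' = fperm S hnd x * (fperm S hnd y)⁻¹ := by
    rw [inv_mul_eq_iff_eq_mul, ← mul_assoc, hpi, mul_assoc, mul_inv_cancel, mul_one]
  calc (fperm S hnd x')⁻¹ x' = ((fperm S hnd x')⁻¹ * fperm S hnd y') y := by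
        rw [Equiv.Perm.mul_apply, ← h1]
    _ = (fperm S hnd x * (fperm S hnd y)⁻¹) y := by rw [h2]
    _ = fperm S hnd x (Tmap S hnd y) := rfl

/-- (p5): `T y' = F y (T x)` where `(y,y') = S(x,x')`. -/
lemma pair_T2 (hbr : Braided S) (hinv : Invol S) (x x' : X) :
    Tmap S hnd (fperm S hnd x' x) = fperm S hnd (gperm S hnd x x') (Tmap S hnd x) := by
  have hpi := pair_perm hnd hbr x x'
  set y := gperm S hnd x x'
  set y' := fperm S hnd x' x
  have h2 : (fperm S hnd y')⁻¹ * fperm S hnd x' = fperm S hnd y * (fperm S hnd x)⁻¹ := by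
    rw [inv_mul_eq_iff_eq_mul, ← mul_assoc, ← hpi, mul_assoc, mul_inv_cancel, mul_one]
  calc (fperm S hnd y')⁻¹ y' = ((fperm S hnd y')⁻¹ * fperm S hnd x') x := rfl
    _ = (fperm S hnd y * (fperm S hnd x)⁻¹) x := by rw [h2]
    _ = fperm S hnd y (Tmap S hnd x) := rfl

lemma UT (hinv : Invol S) (x : X) : Umap S hnd (Tmap S hnd x) = x := by
  have hx : fperm S hnd x (Tmap S hnd x) = x := Equiv.apply_symm_apply _ x
  have h : gperm S hnd (Tmap S hnd x) x = Tmap S hnd x := by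
    rw [lemC hnd hinv (Tmap S hnd x) x, hx]; rfl
  unfold Umap
  rw [Equiv.Perm.inv_def, Equiv.symm_apply_eq]
  exact h.symm

lemma TU (hinv : Invol S) (y : X) : Tmap S hnd (Umap S hnd y) = y := by
  have hy : gperm S hnd y (Umap S hnd y) = y := Equiv.apply_symm_apply _ y
  have h : fperm S hnd (Umap S hnd y) y = Umap S hnd y := by
    rw [lemC' hnd hinv y (Umap S hnd y), hy]; rfl
  unfold Tmap
  rw [Equiv.Perm.inv_def, Equiv.symm_apply_eq]
  exact h.symm

/-! ### Structure group relation -/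

lemma struct_rel (x y : X) :
    (PresentedGroup.of x * PresentedGroup.of y : StructureGroup S) =
      PresentedGroup.of (gperm S hnd x y) * PresentedGroup.of (fperm S hnd y x) := by
  have hmem : FreeGroup.of x * FreeGroup.of y *
      (FreeGroup.of ((S (x, y)).1) * FreeGroup.of ((S (x, y)).2))⁻¹ ∈ structRels S :=
    ⟨x, y, rfl⟩
  have h1 : (PresentedGroup.mk (structRels S)) (FreeGroup.of x * FreeGroup.of y *
      (FreeGroup.of ((S (x, y)).1) * FreeGroup.of ((S (x, y)).2))⁻¹) = 1 := by
    apply (QuotientGroup.eq_one_iff _).2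
    exact Subgroup.subset_normalClosure hmem
  rw [map_mul, map_inv, map_mul, map_mul] at h1
  have := mul_eq_one_iff_eq_inv.1 h1
  rw [inv_inv] at this
  exact this

/-! ### Semidirect product decomposition -/

lemma kappa_add (a b : X →₀ ℤ) : kappaMX a * kappaMX b = kappaMX (a + b) := by
  unfold kappaMX
  rw [← map_mul]
  rfl

lemma emd_cancel_inv' (σ : Equiv.Perm X) (t : X →₀ ℤ) :
    Finsupp.equivMapDomain σ (Finsupp.equivMapDomain σ⁻¹ t) = t := by
  rw [← Finsupp.equivMapDomain_trans]
  have h : (σ⁻¹ : Equiv.Perm X).trans σ = Equiv.refl X := by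
    ext a; exact Equiv.Perm.apply_inv_self σ a
  rw [h]
  exact Finsupp.equivMapDomain_refl t

lemma iota_kappa_eq {σ σ' : Equiv.Perm X} {t t' : X →₀ ℤ}
    (h : iotaMX σ * kappaMX t = iotaMX σ' * kappaMX t') : σ = σ' ∧ t = t' := by
  have hr : σ = σ' := by
    have := congrArg SemidirectProduct.right h
    simpa [iotaMX, kappaMX] using this
  refine ⟨hr, ?_⟩
  have hl := congrArg SemidirectProduct.left h
  simp only [iotaMX, kappaMX, SemidirectProduct.mul_left, SemidirectProduct.left_inr,
    SemidirectProduct.right_inr, SemidirectProduct.left_inl, one_mul] at hl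
  rw [hr] at hl
  have := (permMulHom X σ').injective hl
  exact (Multiplicative.ofAdd.injective this :)

lemma permMulHom_ofAdd (σ : Equiv.Perm X) (t : X →₀ ℤ) :
    permMulHom X σ (Multiplicative.ofAdd t) =
      Multiplicative.ofAdd (Finsupp.equivMapDomain σ t) := rfl

lemma iota_kappa_mul (σ₁ σ₂ : Equiv.Perm X) (t₁ t₂ : X →₀ ℤ) :
    (iotaMX σ₁ * kappaMX t₁) * (iotaMX σ₂ * kappaMX t₂) =
      iotaMX (σ₁ * σ₂) * kappaMX (Finsupp.equivMapDomain σ₂⁻¹ t₁ + t₂) := by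
  have key : ∀ (σ : Equiv.Perm X) (t : X →₀ ℤ),
      kappaMX t * iotaMX σ = iotaMX σ * kappaMX (Finsupp.equivMapDomain σ⁻¹ t) := by
    intro σ t
    ext
    · simp only [iotaMX, kappaMX, SemidirectProduct.mul_left, SemidirectProduct.left_inl,
        SemidirectProduct.left_inr, SemidirectProduct.right_inl, SemidirectProduct.right_inr,
        permMulHom_ofAdd, map_one, one_mul, mul_one]
      simp [Equiv.Perm.inv_def]
    · simp [iotaMX, kappaMX]
  rw [mul_assoc, ← mul_assoc (kappaMX t₁), key, mul_assoc, ← mul_assoc, ← map_mul, kappa_add]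

/-! ### equivMapDomain helpers -/

open Finsupp (single equivMapDomain)

lemma emd_add (σ : Equiv.Perm X) (a b : X →₀ ℤ) :
    equivMapDomain σ (a + b) = equivMapDomain σ a + equivMapDomain σ b := by
  ext y; simp

lemma emd_sub (σ : Equiv.Perm X) (a b : X →₀ ℤ) :
    equivMapDomain σ (a - b) = equivMapDomain σ a - equivMapDomain σ b := by
  ext y; simp

lemma emd_mul (σ τ : Equiv.Perm X) (t : X →₀ ℤ) :
    equivMapDomain (σ * τ) t = equivMapDomain σ (equivMapDomain τ t) := by
  rw [Equiv.Perm.mul_def]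
  exact Finsupp.equivMapDomain_trans τ σ t

lemma emd_apply (σ : Equiv.Perm X) (t : X →₀ ℤ) (y : X) :
    equivMapDomain σ t y = t (σ⁻¹ y) := rfl

lemma emd_inv_cancel (σ : Equiv.Perm X) (t : X →₀ ℤ) :
    equivMapDomain σ⁻¹ (equivMapDomain σ t) = t := by
  rw [← emd_mul, inv_mul_cancel]
  exact Finsupp.equivMapDomain_refl t

lemma emd_cancel_inv (σ : Equiv.Perm X) (t : X →₀ ℤ) :
    equivMapDomain σ (equivMapDomain σ⁻¹ t) = t := by
  rw [← emd_mul, mul_inv_cancel]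
  exact Finsupp.equivMapDomain_refl t

/-! ### The norm on `X →₀ ℤ` -/

def nrm (t : X →₀ ℤ) : ℕ := t.sum fun _ n => n.natAbs

lemma nrm_eq_sum {t : X →₀ ℤ} {A : Finset X} (h : t.support ⊆ A) :
    nrm t = ∑ y ∈ A, (t y).natAbs :=
  Finsupp.sum_of_support_subset t h _ (fun _ _ => rfl)

lemma nrm_zero : nrm (0 : X →₀ ℤ) = 0 := by simp [nrm]

lemma nrm_domCongr (σ : Equiv.Perm X) (t : X →₀ ℤ) :
    nrm (equivMapDomain σ t) = nrm t := by
  unfold nrm Finsupp.sum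
  rw [show (equivMapDomain σ t).support = t.support.map σ.toEmbedding from rfl,
    Finset.sum_map]
  exact Finset.sum_congr rfl fun a _ => by simp

lemma nrm_pos {t : X →₀ ℤ} (h : t ≠ 0) : 1 ≤ nrm t := by
  obtain ⟨a, ha⟩ : ∃ a, t a ≠ 0 := by
    by_contra hc
    push_neg at hc
    exact h (Finsupp.ext hc)
  have haS : a ∈ t.support := Finsupp.mem_support_iff.2 ha
  have h1 : (t a).natAbs ≤ ∑ y ∈ t.support, (t y).natAbs :=
    Finset.single_le_sum (f := fun y => (t y).natAbs) (fun _ _ => Nat.zero_le _) haS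
  rw [nrm_eq_sum (subset_refl _)]
  omega

lemma nrm_sub_single {t : X →₀ ℤ} {x : X} (h : 1 ≤ t x) :
    nrm (t - single x 1) + 1 = nrm t := by
  classical
  set s := t - single x 1 with hs
  have hx : x ∈ t.support := Finsupp.mem_support_iff.2 (by omega)
  set A := t.support ∪ s.support with hA
  have hxA : x ∈ A := Finset.mem_union_left _ hx
  have h1 : nrm t = ∑ y ∈ A, (t y).natAbs := nrm_eq_sum Finset.subset_union_left
  have h2 : nrm s = ∑ y ∈ A, (s y).natAbs := nrm_eq_sum Finset.subset_union_right
  rw [h1, h2, ← Finset.add_sum_erase A _ hxA, ← Finset.add_sum_erase A _ hxA]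
  have hsx : s x = t x - 1 := by simp [hs]
  have herase : ∑ y ∈ A.erase x, (s y).natAbs = ∑ y ∈ A.erase x, (t y).natAbs := by
    refine Finset.sum_congr rfl fun y hy => ?_
    have hne : y ≠ x := Finset.ne_of_mem_erase hy
    rw [hs, Finsupp.sub_apply, Finsupp.single_apply, if_neg (Ne.symm hne), sub_zero]
  rw [herase]
  omega

lemma nrm_neg (t : X →₀ ℤ) : nrm (-t) = nrm t := by
  unfold nrm Finsupp.sum
  rw [Finsupp.support_neg]
  exact Finset.sum_congr rfl fun a _ => by simp

lemma nrm_add_single {t : X →₀ ℤ} {x : X} (h : t x ≤ -1) :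
    nrm (t + single x 1) + 1 = nrm t := by
  have h1 : 1 ≤ (-t) x := by rw [Finsupp.neg_apply]; omega
  have h2 := nrm_sub_single h1
  have heq : -t - single x 1 = -(t + single x 1) := by abel
  rw [heq, nrm_neg, nrm_neg] at h2
  exact h2

/-! ### Moves -/

variable (S) in
def MvP (hnd : Nondeg S) (t s : X →₀ ℤ) (x : X) : Prop :=
  1 ≤ t x ∧ s = equivMapDomain ((fperm S hnd x)⁻¹ : Equiv.Perm X) (t - single x 1)

variable (S) in
def MvN (hnd : Nondeg S) (t s : X →₀ ℤ) (x : X) : Prop :=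
  t (Tmap S hnd x) ≤ -1 ∧ s = equivMapDomain (fperm S hnd x : Equiv.Perm X) t + single x 1

variable (S) in
def Mv (hnd : Nondeg S) (t s : X →₀ ℤ) (w : StructureGroup S) : Prop :=
  (∃ x, w = PresentedGroup.of x ∧ MvP S hnd t s x) ∨
  (∃ x, w = (PresentedGroup.of x)⁻¹ ∧ MvN S hnd t s x)

lemma mv_nrm {t s : X →₀ ℤ} {w : StructureGroup S} (h : Mv S hnd t s w) :
    nrm s + 1 = nrm t := by
  rcases h with ⟨x, -, hx, rfl⟩ | ⟨x, -, hx, rfl⟩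
  · rw [nrm_domCongr]
    exact nrm_sub_single hx
  · have hrw : equivMapDomain (fperm S hnd x : Equiv.Perm X) t + single x 1 =
        equivMapDomain (fperm S hnd x : Equiv.Perm X) (t + single (Tmap S hnd x) 1) := by
      rw [emd_add, Finsupp.equivMapDomain_single]
      congr 2
      exact (Equiv.Perm.apply_inv_self _ _).symm
    rw [hrw, nrm_domCongr]
    exact nrm_add_single hx

lemma mv_ne_zero {t s : X →₀ ℤ} {w : StructureGroup S} (h : Mv S hnd t s w) : t ≠ 0 := by
  rcases h with ⟨x, -, hx, -⟩ | ⟨x, -, hx, -⟩ <;>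
    · intro h0
      rw [h0] at hx
      simp at hx

lemma mv_exists (hinv : Invol S) {t : X →₀ ℤ} (h : t ≠ 0) :
    ∃ p : (X →₀ ℤ) × StructureGroup S, Mv S hnd t p.1 p.2 := by
  obtain ⟨a, ha⟩ : ∃ a, t a ≠ 0 := by
    by_contra hc
    push_neg at hc
    exact h (Finsupp.ext hc)
  rcases lt_or_gt_of_ne ha with hneg | hpos
  · refine ⟨⟨equivMapDomain (fperm S hnd (Umap S hnd a) : Equiv.Perm X) t +
      single (Umap S hnd a) 1, (PresentedGroup.of (Umap S hnd a))⁻¹⟩, Or.inr ?_⟩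
    exact ⟨Umap S hnd a, rfl, by rw [TU hnd hinv]; omega, rfl⟩
  · refine ⟨⟨equivMapDomain ((fperm S hnd a)⁻¹ : Equiv.Perm X) (t - single a 1),
      PresentedGroup.of a⟩, Or.inl ?_⟩
    exact ⟨a, rfl, by omega, rfl⟩

/-! ### Local confluence -/

lemma confl_PP (hbr : Braided S) (hinv : Invol S) {t : X →₀ ℤ} {x y : X}
    (hx : 1 ≤ t x) (hy : 1 ≤ t y) (hxy : x ≠ y) :
    ∃ u v₁ v₂,
      Mv S hnd (equivMapDomain ((fperm S hnd x)⁻¹ : Equiv.Perm X) (t - single x 1)) u v₁ ∧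
      Mv S hnd (equivMapDomain ((fperm S hnd y)⁻¹ : Equiv.Perm X) (t - single y 1)) u v₂ ∧
      v₁ * PresentedGroup.of x = v₂ * PresentedGroup.of y := by
  classical
  set a := (fperm S hnd x)⁻¹ y with ha
  set b := (fperm S hnd y)⁻¹ x with hb
  have hFxa : fperm S hnd x a = y := Equiv.Perm.apply_inv_self _ _
  have hFyb : fperm S hnd y b = x := Equiv.Perm.apply_inv_self _ _
  have hgax : gperm S hnd a x = b := by
    rw [lemC hnd hinv a x, hFxa, hb]
  have hgby : gperm S hnd b y = a := by
    rw [lemC hnd hinv b y, hFyb, ha]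
  have hperm : fperm S hnd x * fperm S hnd a = fperm S hnd y * fperm S hnd b := by
    have h := pair_perm hnd hbr a x
    rw [hFxa, hgax] at h
    exact h
  refine ⟨equivMapDomain ((fperm S hnd x * fperm S hnd a)⁻¹ : Equiv.Perm X)
    (t - single x 1 - single y 1), PresentedGroup.of a, PresentedGroup.of b,
    Or.inl ⟨a, rfl, ?_, ?_⟩, Or.inl ⟨b, rfl, ?_, ?_⟩, ?_⟩
  · -- coefficient condition for P_a at s₁
    rw [emd_apply, inv_inv, hFxa, Finsupp.sub_apply, Finsupp.single_apply,
      if_neg hxy, sub_zero]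
    exact hy
  · -- formula for u from side 1
    rw [mul_inv_rev, emd_mul, emd_sub _ (t - single x 1)]
    congr 2
    rw [ha, ← Finsupp.equivMapDomain_single ((fperm S hnd x)⁻¹ : Equiv.Perm X)]
  · -- coefficient condition for P_b at s₂
    rw [emd_apply, inv_inv, hFyb, Finsupp.sub_apply, Finsupp.single_apply,
      if_neg (Ne.symm hxy), sub_zero]
    exact hx
  · -- formula for u from side 2
    rw [hperm, mul_inv_rev, emd_mul, sub_right_comm, emd_sub _ (t - single y 1)]
    congr 2
    rw [hb, ← Finsupp.equivMapDomain_single ((fperm S hnd y)⁻¹ : Equiv.Perm X)]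
  · -- letters
    have h := struct_rel hnd a x
    rw [hgax, hFxa] at h
    exact h

lemma confl_NN (hbr : Braided S) (hinv : Invol S) {t : X →₀ ℤ} {p q : X}
    (hp : t (Tmap S hnd p) ≤ -1) (hq : t (Tmap S hnd q) ≤ -1) (hpq : p ≠ q) :
    ∃ u v₁ v₂,
      Mv S hnd (equivMapDomain (fperm S hnd p : Equiv.Perm X) t + single p 1) u v₁ ∧
      Mv S hnd (equivMapDomain (fperm S hnd q : Equiv.Perm X) t + single q 1) u v₂ ∧
      v₁ * (PresentedGroup.of p)⁻¹ = v₂ * (PresentedGroup.of q)⁻¹ := by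
  classical
  have hTpq : Tmap S hnd p ≠ Tmap S hnd q := fun h =>
    hpq (by rw [← UT hnd hinv p, h, UT hnd hinv q])
  set p' := (gperm S hnd p)⁻¹ q with hp'
  have hgpp' : gperm S hnd p p' = q := Equiv.Perm.apply_inv_self _ _
  set q' := fperm S hnd p' p with hq'
  have hperm : fperm S hnd p' * fperm S hnd p = fperm S hnd q' * fperm S hnd q := by
    have h := pair_perm hnd hbr p p'
    rw [hgpp'] at h
    exact h
  have hT1 : Tmap S hnd p' = fperm S hnd p (Tmap S hnd q) := by
    have h := pair_T1 hnd hbr hinv p p'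
    rw [hgpp'] at h
    exact h
  have hT2 : Tmap S hnd q' = fperm S hnd q (Tmap S hnd p) := by
    have h := pair_T2 hnd hbr hinv p p'
    rw [hgpp'] at h
    exact h
  have hfq'q : fperm S hnd q' q = p' := by
    have h := pair_f hnd hinv p p'
    rw [hgpp'] at h
    exact h
  refine ⟨equivMapDomain ((fperm S hnd p' * fperm S hnd p : Equiv.Perm X)) t
      + single q' 1 + single p' 1, (PresentedGroup.of p')⁻¹, (PresentedGroup.of q')⁻¹,
    Or.inr ⟨p', rfl, ?_, ?_⟩, Or.inr ⟨q', rfl, ?_, ?_⟩, ?_⟩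
  · -- condition N_{p'} at s₁
    have hne : p ≠ fperm S hnd p (Tmap S hnd q) := by
      intro hcon
      exact hTpq ((fperm S hnd p).injective
        (by rw [← hcon]; exact Equiv.Perm.apply_inv_self _ _))
    rw [Finsupp.add_apply, emd_apply, hT1, Equiv.Perm.inv_apply_self,
      Finsupp.single_apply, if_neg hne, add_zero]
    exact hq
  · -- formula for u, side 1
    rw [emd_add, ← emd_mul, Finsupp.equivMapDomain_single, ← hq']
  · -- condition N_{q'} at s₂
    have hne : q ≠ fperm S hnd q (Tmap S hnd p) := by
      intro hcon
      exact hTpq ((fperm S hnd q).injective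
        (by rw [← hcon]; exact Equiv.Perm.apply_inv_self _ _)).symm
    rw [Finsupp.add_apply, emd_apply, hT2, Equiv.Perm.inv_apply_self,
      Finsupp.single_apply, if_neg hne, add_zero]
    exact hp
  · -- formula for u, side 2
    rw [emd_add, ← emd_mul, Finsupp.equivMapDomain_single, hfq'q, ← hperm, add_right_comm]
  · -- letters
    have h := struct_rel hnd p p'
    rw [hgpp', ← hq'] at h
    rw [← mul_inv_rev, ← mul_inv_rev, h]

lemma confl_PN (hbr : Braided S) (hinv : Invol S) {t : X →₀ ℤ} {p q : X}
    (hp : 1 ≤ t p) (hq : t (Tmap S hnd q) ≤ -1) :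
    ∃ u v₁ v₂,
      Mv S hnd (equivMapDomain ((fperm S hnd p)⁻¹ : Equiv.Perm X) (t - single p 1)) u v₁ ∧
      Mv S hnd (equivMapDomain (fperm S hnd q : Equiv.Perm X) t + single q 1) u v₂ ∧
      v₁ * PresentedGroup.of p = v₂ * (PresentedGroup.of q)⁻¹ := by
  classical
  have hpTq : p ≠ Tmap S hnd q := by
    intro h
    rw [← h] at hq
    omega
  set qt := gperm S hnd p q with hqt
  set pt := fperm S hnd q p with hpt
  have hg : gperm S hnd qt pt = p := pair_g hnd hinv p q
  have hf : fperm S hnd pt qt = q := pair_f hnd hinv p q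
  have hperm : fperm S hnd pt * fperm S hnd qt = fperm S hnd q * fperm S hnd p := by
    have h := pair_perm hnd hbr qt pt
    rw [hg, hf] at h
    exact h
  have hT1 : Tmap S hnd pt = fperm S hnd qt (Tmap S hnd p) := by
    have h := pair_T1 hnd hbr hinv qt pt
    rw [hg] at h
    exact h
  have hT2 : Tmap S hnd q = fperm S hnd p (Tmap S hnd qt) := by
    have h := pair_T2 hnd hbr hinv qt pt
    rw [hg, hf] at h
    exact h
  have hperm2 : ((fperm S hnd pt)⁻¹ * fperm S hnd q : Equiv.Perm X) =
      fperm S hnd qt * (fperm S hnd p)⁻¹ := by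
    rw [inv_mul_eq_iff_eq_mul, ← mul_assoc, hperm, mul_inv_cancel_right]
  refine ⟨equivMapDomain ((fperm S hnd qt * (fperm S hnd p)⁻¹ : Equiv.Perm X)) (t - single p 1)
      + single qt 1, (PresentedGroup.of qt)⁻¹, PresentedGroup.of pt,
    Or.inr ⟨qt, rfl, ?_, ?_⟩, Or.inl ⟨pt, rfl, ?_, ?_⟩, ?_⟩
  · -- condition N_{qt} at s₁
    have h1 : ((fperm S hnd p)⁻¹ : Equiv.Perm X)⁻¹ (Tmap S hnd qt) = Tmap S hnd q := by
      rw [inv_inv, ← hT2]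
    rw [emd_apply, h1, Finsupp.sub_apply, Finsupp.single_apply,
      if_neg hpTq, sub_zero]
    exact hq
  · -- formula for u, side 1
    rw [← emd_mul]
  · -- condition P_{pt} at s₂
    have h1 : ((fperm S hnd q : Equiv.Perm X))⁻¹ pt = p := by
      rw [hpt]
      exact Equiv.Perm.inv_apply_self _ _
    have h2 : (0 : ℤ) ≤ single q 1 pt := by
      rw [Finsupp.single_apply]
      split <;> omega
    rw [Finsupp.add_apply, emd_apply, h1]
    omega
  · -- formula for u, side 2
    have e1 : ((fperm S hnd pt)⁻¹ : Equiv.Perm X) q = qt := by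
      rw [← hf]
      exact Equiv.Perm.inv_apply_self _ _
    have e2 : ((fperm S hnd pt)⁻¹ : Equiv.Perm X) pt =
        fperm S hnd qt (Tmap S hnd p) := by rw [← hT1]; rfl
    have e3 : (fperm S hnd qt * (fperm S hnd p)⁻¹ : Equiv.Perm X) p =
        fperm S hnd qt (Tmap S hnd p) := rfl
    simp only [emd_sub, emd_add, ← emd_mul, Finsupp.equivMapDomain_single]
    rw [hperm2, e1, e2, e3]
    abel
  · -- letters
    have h := struct_rel hnd p q
    rw [← hqt, ← hpt] at h
    rw [inv_mul_eq_iff_eq_mul, ← mul_assoc, ← h, mul_inv_cancel_right]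

theorem confl (hbr : Braided S) (hinv : Invol S) {t s₁ s₂ : X →₀ ℤ}
    {w₁ w₂ : StructureGroup S} (h₁ : Mv S hnd t s₁ w₁) (h₂ : Mv S hnd t s₂ w₂) :
    (s₁ = s₂ ∧ w₁ = w₂) ∨
      ∃ u v₁ v₂, Mv S hnd s₁ u v₁ ∧ Mv S hnd s₂ u v₂ ∧ v₁ * w₁ = v₂ * w₂ := by
  rcases h₁ with ⟨x, rfl, hx1, rfl⟩ | ⟨x, rfl, hx1, rfl⟩ <;>
    rcases h₂ with ⟨y, rfl, hy1, rfl⟩ | ⟨y, rfl, hy1, rfl⟩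
  · -- P P
    by_cases hxy : x = y
    · subst hxy
      exact Or.inl ⟨rfl, rfl⟩
    · exact Or.inr (confl_PP hnd hbr hinv hx1 hy1 hxy)
  · -- P N
    exact Or.inr (confl_PN hnd hbr hinv hx1 hy1)
  · -- N P
    obtain ⟨u, v₁, v₂, m₁, m₂, hv⟩ := confl_PN hnd hbr hinv hy1 hx1
    exact Or.inr ⟨u, v₂, v₁, m₂, m₁, hv.symm⟩
  · -- N N
    by_cases hxy : x = y
    · subst hxy
      exact Or.inl ⟨rfl, rfl⟩
    · exact Or.inr (confl_NN hnd hbr hinv hx1 hy1 hxy)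

/-! ### The inverse map `chi` -/

open scoped Classical

variable (S) in
noncomputable def pick (hnd : Nondeg S) (hinv : Invol S) (t : X →₀ ℤ) (h : t ≠ 0) :
    (X →₀ ℤ) × StructureGroup S :=
  Classical.choose (mv_exists hnd hinv h)

lemma pick_spec (hinv : Invol S) {t : X →₀ ℤ} (h : t ≠ 0) :
    Mv S hnd t (pick S hnd hinv t h).1 (pick S hnd hinv t h).2 :=
  Classical.choose_spec (mv_exists hnd hinv h)

variable (S) in
noncomputable def chiN (hnd : Nondeg S) (hinv : Invol S) : ℕ → (X →₀ ℤ) → StructureGroup S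
  | 0, _ => 1
  | n + 1, t =>
    if h : t = 0 then 1
    else chiN hnd hinv n (pick S hnd hinv t h).1 * (pick S hnd hinv t h).2

lemma chiN_zero_arg (hinv : Invol S) (n : ℕ) : chiN S hnd hinv n 0 = 1 := by
  cases n with
  | zero => rfl
  | succ n => rw [chiN, dif_pos rfl]

lemma chiN_congr (hinv : Invol S) :
    ∀ k t, nrm t = k → ∀ n m, k ≤ n → k ≤ m →
      chiN S hnd hinv n t = chiN S hnd hinv m t := by
  intro k
  induction k using Nat.strong_induction_on with
  | _ k IH =>
    intro t hk n m hn hm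
    by_cases h0 : t = 0
    · subst h0
      rw [chiN_zero_arg hnd hinv, chiN_zero_arg hnd hinv]
    · have hs := pick_spec hnd hinv h0
      have hnrm := mv_nrm hnd hs
      have hk1 : 1 ≤ k := hk ▸ nrm_pos h0
      obtain ⟨n', rfl⟩ : ∃ n', n = n' + 1 := ⟨n - 1, by omega⟩
      obtain ⟨m', rfl⟩ : ∃ m', m = m' + 1 := ⟨m - 1, by omega⟩
      rw [chiN, chiN, dif_neg h0, dif_neg h0]
      congr 1
      exact IH (nrm (pick S hnd hinv t h0).1) (by omega) _ rfl n' m' (by omega) (by omega)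

variable (S) in
noncomputable def chi (hnd : Nondeg S) (hinv : Invol S) (t : X →₀ ℤ) : StructureGroup S :=
  chiN S hnd hinv (nrm t) t

lemma chi_zero (hinv : Invol S) : chi S hnd hinv 0 = 1 := by
  unfold chi
  rw [nrm_zero]
  rfl

lemma chi_eq (hinv : Invol S) {t : X →₀ ℤ} (h : t ≠ 0) :
    chi S hnd hinv t =
      chi S hnd hinv (pick S hnd hinv t h).1 * (pick S hnd hinv t h).2 := by
  have hs := pick_spec hnd hinv h
  have hnrm := mv_nrm hnd hs
  unfold chi
  rw [← hnrm, chiN, dif_neg h]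

theorem wd (hbr : Braided S) (hinv : Invol S) :
    ∀ k t s (w : StructureGroup S), nrm t = k → Mv S hnd t s w →
      chi S hnd hinv t = chi S hnd hinv s * w := by
  intro k
  induction k using Nat.strong_induction_on with
  | _ k IH =>
    intro t s w hk hm
    have ht : t ≠ 0 := mv_ne_zero hnd hm
    have hs0 := pick_spec hnd hinv ht
    have hnrm0 := mv_nrm hnd hs0
    have hnrm := mv_nrm hnd hm
    rw [chi_eq hnd hinv ht]
    rcases confl hnd hbr hinv hs0 hm with ⟨he, hw⟩ | ⟨u, v₁, v₂, m₁, m₂, hv⟩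
    · rw [he, hw]
    · have h1 : chi S hnd hinv (pick S hnd hinv t ht).1 = chi S hnd hinv u * v₁ :=
        IH (nrm (pick S hnd hinv t ht).1) (by omega) _ _ _ rfl m₁
      have h2 : chi S hnd hinv s = chi S hnd hinv u * v₂ :=
        IH (nrm s) (by omega) _ _ _ rfl m₂
      rw [h1, h2, mul_assoc, mul_assoc, hv]

theorem chi_key (hbr : Braided S) (hinv : Invol S) (t : X →₀ ℤ) (x : X) :
    chi S hnd hinv (equivMapDomain (fperm S hnd x : Equiv.Perm X) t + single x 1) =
      chi S hnd hinv t * PresentedGroup.of x := by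
  classical
  set t' := equivMapDomain (fperm S hnd x : Equiv.Perm X) t + single x 1 with ht'
  by_cases hc : 0 ≤ t (Tmap S hnd x)
  · have hcond : 1 ≤ t' x := by
      rw [ht', Finsupp.add_apply, emd_apply, Finsupp.single_apply, if_pos rfl]
      have : ((fperm S hnd x)⁻¹ : Equiv.Perm X) x = Tmap S hnd x := rfl
      rw [this]
      omega
    have heq : t = equivMapDomain ((fperm S hnd x)⁻¹ : Equiv.Perm X) (t' - single x 1) := by
      rw [ht', add_sub_cancel_right, emd_inv_cancel]
    exact wd hnd hbr hinv (nrm t') t' t (PresentedGroup.of x) rfl (Or.inl ⟨x, rfl, hcond, heq⟩)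
  · push_neg at hc
    have hcond : t (Tmap S hnd x) ≤ -1 := by omega
    have h := wd hnd hbr hinv (nrm t) t t' ((PresentedGroup.of x)⁻¹) rfl
      (Or.inr ⟨x, rfl, hcond, ht'⟩)
    rw [h, inv_mul_cancel_right]

/-! ### Properties of `ρ` and `π` -/

section Cocycle

variable {Φ : StructureGroup S →* MX X}
  {ρ : StructureGroup S → Equiv.Perm X} {π : StructureGroup S → (X →₀ ℤ)}
  (hρπ : ∀ g : StructureGroup S, Φ g = iotaMX (ρ g) * kappaMX (π g))

include hρπ

lemma rho_pi_mul (g₁ g₂ : StructureGroup S) :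
    ρ (g₁ * g₂) = ρ g₁ * ρ g₂ ∧
      π (g₁ * g₂) = equivMapDomain ((ρ g₂)⁻¹ : Equiv.Perm X) (π g₁) + π g₂ := by
  have h := hρπ (g₁ * g₂)
  rw [map_mul, hρπ g₁, hρπ g₂, iota_kappa_mul] at h
  obtain ⟨h1, h2⟩ := iota_kappa_eq h
  exact ⟨h1.symm, h2.symm⟩

lemma rho_pi_one : ρ 1 = 1 ∧ π 1 = 0 := by
  have h : iotaMX (ρ 1) * kappaMX (π 1) = iotaMX 1 * kappaMX 0 := by
    rw [← hρπ 1, map_one, map_one]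
    unfold kappaMX
    rw [show Multiplicative.ofAdd (0 : X →₀ ℤ) = 1 from rfl, map_one, mul_one]
  exact iota_kappa_eq h

lemma rho_inv (g : StructureGroup S) : ρ g⁻¹ = (ρ g)⁻¹ := by
  have h := (rho_pi_mul hρπ g⁻¹ g).1
  rw [inv_mul_cancel, (rho_pi_one hρπ).1] at h
  exact eq_inv_of_mul_eq_one_left h.symm

lemma rho_pi_of (hPhi : ∀ x : X, Φ (PresentedGroup.of x) =
      iotaMX (fperm S hnd x)⁻¹ * kappaMX (Finsupp.single x 1)) (x : X) :
    ρ (PresentedGroup.of x) = (fperm S hnd x)⁻¹ ∧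
      π (PresentedGroup.of x) = single x 1 :=
  iota_kappa_eq ((hρπ _).symm.trans (hPhi x))

variable (hPhi : ∀ x : X, Φ (PresentedGroup.of x) =
    iotaMX (fperm S hnd x)⁻¹ * kappaMX (Finsupp.single x 1))

include hPhi

lemma pi_mul_of (g : StructureGroup S) (x : X) :
    π (g * PresentedGroup.of x) =
      equivMapDomain (fperm S hnd x : Equiv.Perm X) (π g) + single x 1 := by
  have h := (rho_pi_mul hρπ g (PresentedGroup.of x)).2
  rw [(rho_pi_of hnd hρπ hPhi x).1, (rho_pi_of hnd hρπ hPhi x).2, inv_inv] at h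
  exact h

lemma pi_inv_of (x : X) :
    π ((PresentedGroup.of x : StructureGroup S)⁻¹) = -single (Tmap S hnd x) 1 := by
  have h := (rho_pi_mul hρπ (PresentedGroup.of x) (PresentedGroup.of x)⁻¹).2
  rw [mul_inv_cancel, (rho_pi_one hρπ).2, rho_inv hρπ,
    (rho_pi_of hnd hρπ hPhi x).1, (rho_pi_of hnd hρπ hPhi x).2, inv_inv,
    Finsupp.equivMapDomain_single] at h
  have h2 : ((fperm S hnd x)⁻¹ : Equiv.Perm X) x = Tmap S hnd x := rfl
  rw [h2] at h
  exact (neg_eq_of_add_eq_zero_right h.symm).symm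

lemma pi_mul_inv_of (g : StructureGroup S) (x : X) :
    π (g * (PresentedGroup.of x)⁻¹) =
      equivMapDomain ((fperm S hnd x)⁻¹ : Equiv.Perm X) (π g) - single (Tmap S hnd x) 1 := by
  have h := (rho_pi_mul hρπ g (PresentedGroup.of x)⁻¹).2
  rw [rho_inv hρπ, (rho_pi_of hnd hρπ hPhi x).1, inv_inv,
    pi_inv_of hnd hρπ hPhi x] at h
  rw [h, sub_eq_add_neg]

lemma mv_pi {t s : X →₀ ℤ} {w : StructureGroup S} (hm : Mv S hnd t s w)
    (g : StructureGroup S) (hg : π g = s) : π (g * w) = t := by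
  rcases hm with ⟨x, rfl, hx, hs⟩ | ⟨x, rfl, hx, hs⟩
  · rw [pi_mul_of hnd hρπ hPhi, hg, hs, emd_cancel_inv, sub_add_cancel]
  · rw [pi_mul_inv_of hnd hρπ hPhi, hg, hs, emd_add, emd_inv_cancel,
      Finsupp.equivMapDomain_single]
    have h2 : ((fperm S hnd x)⁻¹ : Equiv.Perm X) x = Tmap S hnd x := rfl
    rw [h2, add_sub_cancel_right]

lemma pi_surj (hinv : Invol S) : ∀ k (t : X →₀ ℤ), nrm t = k → ∃ g, π g = t := by
  intro k
  induction k using Nat.strong_induction_on with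
  | _ k IH =>
    intro t hk
    by_cases h0 : t = 0
    · exact ⟨1, by rw [(rho_pi_one hρπ).2, h0]⟩
    · obtain ⟨p, hp⟩ := mv_exists hnd hinv h0
      have hnrm := mv_nrm hnd hp
      obtain ⟨g, hg⟩ := IH (nrm p.1) (by omega) p.1 rfl
      exact ⟨g * p.2, mv_pi hnd hρπ hPhi hp g hg⟩

end Cocycle

/-! ### `chi` inverts `π` -/

section Final

variable {Φ : StructureGroup S →* MX X}
  {ρ : StructureGroup S → Equiv.Perm X} {π : StructureGroup S → (X →₀ ℤ)}

lemma emd_one (t : X →₀ ℤ) : equivMapDomain (1 : Equiv.Perm X) t = t :=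
  Finsupp.equivMapDomain_refl t

lemma chi_pi_all (hbr : Braided S) (hinv : Invol S)
    (hρπ : ∀ g : StructureGroup S, Φ g = iotaMX (ρ g) * kappaMX (π g))
    (hPhi : ∀ x : X, Φ (PresentedGroup.of x) =
      iotaMX (fperm S hnd x)⁻¹ * kappaMX (Finsupp.single x 1)) :
    ∀ g : StructureGroup S, ∀ t,
      chi S hnd hinv (equivMapDomain ((ρ g)⁻¹ : Equiv.Perm X) t + π g) =
        chi S hnd hinv t * g := by
  have hcomp : ∀ g₁ g₂ : StructureGroup S, ∀ t,
      equivMapDomain ((ρ (g₁ * g₂))⁻¹ : Equiv.Perm X) t + π (g₁ * g₂) =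
        equivMapDomain ((ρ g₂)⁻¹ : Equiv.Perm X)
          (equivMapDomain ((ρ g₁)⁻¹ : Equiv.Perm X) t + π g₁) + π g₂ := by
    intro g₁ g₂ t
    rw [(rho_pi_mul hρπ g₁ g₂).1, (rho_pi_mul hρπ g₁ g₂).2, mul_inv_rev, emd_mul, emd_add,
      add_assoc]
  intro g
  have hmem : g ∈ Subgroup.closure
      (Set.range (PresentedGroup.of : X → StructureGroup S)) := by
    rw [PresentedGroup.closure_range_of]
    exact Subgroup.mem_top g
  refine Subgroup.closure_induction
    (p := fun g _ => ∀ t, chi S hnd hinv (equivMapDomain ((ρ g)⁻¹ : Equiv.Perm X) t + π g) =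
      chi S hnd hinv t * g) ?mem ?one ?mul ?inv hmem
  · rintro _ ⟨x, rfl⟩ t
    rw [(rho_pi_of hnd hρπ hPhi x).1, (rho_pi_of hnd hρπ hPhi x).2, inv_inv]
    exact chi_key hnd hbr hinv t x
  · intro t
    rw [(rho_pi_one hρπ).1, (rho_pi_one hρπ).2, inv_one, emd_one, add_zero, mul_one]
  · intro a b _ _ ha hb t
    rw [hcomp a b t, hb, ha, mul_assoc]
  · intro g _ hg t
    have h1 := hg (equivMapDomain ((ρ g⁻¹)⁻¹ : Equiv.Perm X) t + π g⁻¹)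
    have h2 : equivMapDomain ((ρ g)⁻¹ : Equiv.Perm X)
        (equivMapDomain ((ρ g⁻¹)⁻¹ : Equiv.Perm X) t + π g⁻¹) + π g = t := by
      rw [← hcomp g⁻¹ g t, inv_mul_cancel, (rho_pi_one hρπ).1, (rho_pi_one hρπ).2,
        inv_one, emd_one, add_zero]
    rw [h2] at h1
    exact eq_mul_inv_of_mul_eq h1.symm

lemma chi_pi (hbr : Braided S) (hinv : Invol S)
    (hρπ : ∀ g : StructureGroup S, Φ g = iotaMX (ρ g) * kappaMX (π g))
    (hPhi : ∀ x : X, Φ (PresentedGroup.of x) =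
      iotaMX (fperm S hnd x)⁻¹ * kappaMX (Finsupp.single x 1))
    (g : StructureGroup S) : chi S hnd hinv (π g) = g := by
  have h := chi_pi_all hnd hbr hinv hρπ hPhi g 0
  rw [Finsupp.equivMapDomain_zero, zero_add, chi_zero hnd hinv, one_mul] at h
  exact h

end Final

end CB

/-- Proposition 2.5 (and 2.4): for a nondegenerate symmetric set `(X,S)`, writing the
homomorphism `Φ : G_X → M_X` (with `Φ(x) = ι(f_x⁻¹)κ(e_x)`) as `Φ(g) = ι(ρ(g))·κ(π(g))`:
(a) `π` satisfies the cocycle identity `π(g₁g₂) = ρ(g₂)⁻¹ · π(g₁) + π(g₂)`;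
(b) `π` is bijective; in particular `Φ` is injective. -/
theorem cocycle_bijective {X : Type*} (S : X × X → X × X)
    (hnd : Nondeg S) (hbr : Braided S) (hinv : Invol S)
    (Φ : StructureGroup S →* MX X)
    (hPhi : ∀ x : X, Φ (PresentedGroup.of x) =
      iotaMX (fperm S hnd x)⁻¹ * kappaMX (Finsupp.single x 1))
    (ρ : StructureGroup S → Equiv.Perm X) (π : StructureGroup S → (X →₀ ℤ))
    (hρπ : ∀ g : StructureGroup S, Φ g = iotaMX (ρ g) * kappaMX (π g)) :
    (∀ g₁ g₂ : StructureGroup S,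
      π (g₁ * g₂) = Finsupp.domCongr ((ρ g₂)⁻¹ : Equiv.Perm X) (π g₁) + π g₂) ∧
    Function.Bijective π ∧ Function.Injective Φ := by
  have hπinj : Function.Injective π := by
    intro g₁ g₂ h
    rw [← CB.chi_pi hnd hbr hinv hρπ hPhi g₁, ← CB.chi_pi hnd hbr hinv hρπ hPhi g₂, h]
  refine ⟨?_, ⟨hπinj, ?_⟩, ?_⟩
  · intro g₁ g₂
    rw [Finsupp.domCongr_apply]
    exact (CB.rho_pi_mul hρπ g₁ g₂).2
  · intro t
    exact CB.pi_surj hnd hρπ hPhi hinv (CB.nrm t) t rfl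
  · intro g₁ g₂ h
    exact hπinj (CB.iota_kappa_eq ((hρπ g₁).symm.trans (h.trans (hρπ g₂)))).2
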